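/- Fix λ, μ ∈ ℝ and k ∈ ℤ, and let Q_k be the 4×4 real matrix (1/4)·[[−λ−2μ, −λ+2μ, λ−2π(2k+1), λ+2π(2k+1)], [−λ+2μ, −λ−2μ, λ+2π(2k+1), λ−2π(2k+1)], [λ+2π(2k+1), λ−2π(2k+1), −λ−2μ, −λ+2μ], [λ−2π(2k+1), λ+2π(2k+1), −λ+2μ, −λ−2μ]]. Then Q_k is a rate matrix if and only if 2π·|2k+1| ≤ λ and λ ≤ 2μ. -/
import Mathlib


open Real

/-- A rate matrix: nonnegative off-diagonal entries, rows sum to 0. -/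
def IsRate {k : ℕ} (Q : Matrix (Fin k) (Fin k) ℝ) : Prop :=
  (∀ i j, i ≠ j → 0 ≤ Q i j) ∧ ∀ i, ∑ j, Q i j = 0

/-- The family of matrices `Q_k`. -/
noncomputable def Qk (l m : ℝ) (k : ℤ) : Matrix (Fin 4) (Fin 4) ℝ :=
  (1 / 4 : ℝ) •
    !![-l - 2 * m, -l + 2 * m, l - 2 * π * (2 * k + 1), l + 2 * π * (2 * k + 1);
       -l + 2 * m, -l - 2 * m, l + 2 * π * (2 * k + 1), l - 2 * π * (2 * k + 1);
       l + 2 * π * (2 * k + 1), l - 2 * π * (2 * k + 1), -l - 2 * m, -l + 2 * m;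
       l - 2 * π * (2 * k + 1), l + 2 * π * (2 * k + 1), -l + 2 * m, -l - 2 * m]

/-- `Q_k` is a rate matrix iff `2π·|2k+1| ≤ λ` and `λ ≤ 2μ`. -/
theorem stmt_11 (l m : ℝ) (k : ℤ) :
    IsRate (Qk l m k) ↔ 2 * π * |2 * (k : ℝ) + 1| ≤ l ∧ l ≤ 2 * m := by
  have habs : 2 * π * |2 * (k : ℝ) + 1| ≤ l ↔
      l - 2 * π * (2 * (k:ℝ) + 1) ≥ 0 ∧ l + 2 * π * (2 * (k:ℝ) + 1) ≥ 0 := by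
    rw [show 2 * π * |2 * (k : ℝ) + 1| = |2 * π * (2 * (k:ℝ) + 1)| by
      rw [abs_mul, abs_of_pos (by positivity : (0:ℝ) < 2 * π)], abs_le]
    constructor
    · rintro ⟨h1, h2⟩; constructor <;> linarith
    · rintro ⟨h1, h2⟩; constructor <;> linarith
  constructor
  · rintro ⟨h1, _⟩
    have a01 := h1 0 1 (by decide)
    have a02 := h1 0 2 (by decide)
    have a03 := h1 0 3 (by decide)
    simp [Qk, Matrix.cons_val_one, Matrix.head_cons, Matrix.cons_val_zero,
      Fin.isValue, show (2:Fin 4) = ⟨2,by norm_num⟩ from rfl,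
      show (3:Fin 4) = ⟨3,by norm_num⟩ from rfl] at a01 a02 a03
    exact ⟨habs.mpr ⟨by linarith, by linarith⟩, by linarith⟩
  · rintro ⟨h1, h2⟩
    obtain ⟨hA, hB⟩ := habs.mp h1
    constructor
    · intro i j hij
      fin_cases i <;> fin_cases j <;> simp_all [Qk]
    · intro i
      fin_cases i <;> simp [Qk, Fin.sum_univ_four] <;> ring
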